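/- arXiv:2205.02342 — 2 statements merged into one kernel-verified Lean document; each statement's English description precedes it below -/
import Mathlib

section
/- If a positive linear map Φ : M_n(ℂ) → M_m(ℂ) satisfies tr[Φ(K)* A^p Φ(K) B^{1-p}] ≤ tr[K* Φ†(A)^p K Φ†(B)^{1-p}] for all 0 ≤ p ≤ 1, all positive semidefinite A, B ∈ M_m(ℂ), and all K ∈ M_n(ℂ), then Φ is a Schwarz map, i.e. Φ(K*K) ≥ Φ(K)*Φ(K) for all K. -/
open Matrix
open scoped ComplexOrder

/-- Real power of a matrix, defined spectrally for Hermitian matrices (junk value `0` otherwise). -/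
noncomputable def mpow {k : ℕ} (A : Matrix (Fin k) (Fin k) ℂ) (p : ℝ) : Matrix (Fin k) (Fin k) ℂ :=
  if hA : A.IsHermitian then
    (hA.eigenvectorUnitary : Matrix (Fin k) (Fin k) ℂ) *
      Matrix.diagonal (fun i => ((hA.eigenvalues i ^ p : ℝ) : ℂ)) *
      (hA.eigenvectorUnitary : Matrix (Fin k) (Fin k) ℂ)ᴴ
  else 0

/-- A Schwarz map: `Φ(K*K) ≥ Φ(K)*Φ(K)` for all `K`. -/
def IsSchwarz {a b : ℕ} (Φ : Matrix (Fin a) (Fin a) ℂ →ₗ[ℂ] Matrix (Fin b) (Fin b) ℂ) : Prop :=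
  ∀ K, (Φ (Kᴴ * K) - (Φ K)ᴴ * Φ K).PosSemidef

/-- A positive map: sends positive semidefinite matrices to positive semidefinite matrices. -/
def IsPositiveMap {a b : ℕ} (Φ : Matrix (Fin a) (Fin a) ℂ →ₗ[ℂ] Matrix (Fin b) (Fin b) ℂ) : Prop :=
  ∀ X, X.PosSemidef → (Φ X).PosSemidef

/-- `Ψ` is the Hilbert–Schmidt adjoint of `Φ`: `⟨X, Φ Y⟩ = ⟨Ψ X, Y⟩`. -/
def IsHSAdjoint {a b : ℕ} (Φ : Matrix (Fin a) (Fin a) ℂ →ₗ[ℂ] Matrix (Fin b) (Fin b) ℂ)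
    (Ψ : Matrix (Fin b) (Fin b) ℂ →ₗ[ℂ] Matrix (Fin a) (Fin a) ℂ) : Prop :=
  ∀ X Y, (Xᴴ * Φ Y).trace = ((Ψ X)ᴴ * Y).trace

/-! The endpoint `p = 1`, `B = 1` of the hypothesis already suffices. Applied to `K*` it reads
`tr[Φ(K) A Φ(K)*] ≤ tr[K Φ†(A) K*] = tr[A Φ(K*K)]` for every `A ≥ 0`, because a positive map,
and hence its adjoint, commutes with taking adjoints. Since `tr[Φ(K) A Φ(K)*] = tr[A Φ(K)*Φ(K)]`,
the Hermitian matrix `Φ(K*K) - Φ(K)*Φ(K)` has nonnegative trace against every `A ≥ 0`, so it is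
positive semidefinite. -/

theorem mpow_one {k : ℕ} {A : Matrix (Fin k) (Fin k) ℂ} (hA : A.IsHermitian) : mpow A 1 = A := by
  rw [mpow, dif_pos hA]
  conv_rhs => rw [hA.spectral_theorem]
  simp [Function.comp_def, star_eq_conjTranspose]

theorem mpow_zero {k : ℕ} {A : Matrix (Fin k) (Fin k) ℂ} (hA : A.IsHermitian) : mpow A 0 = 1 := by
  simp [mpow, dif_pos hA, ← star_eq_conjTranspose]

theorem LinearMap.map_star_of_isSelfAdjoint {A B : Type*} [AddCommGroup A] [Module ℂ A]
    [StarAddMonoid A] [StarModule ℂ A] [AddCommGroup B] [Module ℂ B] [StarAddMonoid B]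
    [StarModule ℂ B] (f : A →ₗ[ℂ] B) (hf : ∀ x, IsSelfAdjoint x → IsSelfAdjoint (f x)) (x : A) :
    f (star x) = star (f x) := by
  obtain ⟨⟨a, ha⟩, ⟨b, hb⟩, rfl⟩ : ∃ a b : selfAdjoint A, x = a + Complex.I • b :=
    ⟨realPart x, imaginaryPart x, (realPart_add_I_smul_imaginaryPart x).symm⟩
  simp [ha.star_eq, hb.star_eq, (hf a ha).star_eq, (hf b hb).star_eq]

open scoped MatrixOrder in
theorem IsPositiveMap.map_conjTranspose {a b : ℕ}
    {Φ : Matrix (Fin a) (Fin a) ℂ →ₗ[ℂ] Matrix (Fin b) (Fin b) ℂ} (hΦ : IsPositiveMap Φ)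
    (X : Matrix (Fin a) (Fin a) ℂ) : Φ Xᴴ = (Φ X)ᴴ := by
  refine Φ.map_star_of_isSelfAdjoint (fun Y hY => ?_) X
  obtain ⟨P, Q, hP, hQ, rfl⟩ := IsSelfAdjoint.exists_nonneg_sub_nonneg hY
  rw [map_sub]
  exact (hΦ P hP.posSemidef).isHermitian.sub (hΦ Q hQ.posSemidef).isHermitian

theorem IsHSAdjoint.map_conjTranspose {a b : ℕ}
    {Φ : Matrix (Fin a) (Fin a) ℂ →ₗ[ℂ] Matrix (Fin b) (Fin b) ℂ}
    {Ψ : Matrix (Fin b) (Fin b) ℂ →ₗ[ℂ] Matrix (Fin a) (Fin a) ℂ} (hadj : IsHSAdjoint Φ Ψ)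
    (hΦ : ∀ Y, Φ Yᴴ = (Φ Y)ᴴ) (X : Matrix (Fin b) (Fin b) ℂ) : Ψ Xᴴ = (Ψ X)ᴴ := by
  rw [← conjTranspose_inj, conjTranspose_conjTranspose (Ψ X), ext_iff_trace_mul_right]
  intro Y
  calc ((Ψ Xᴴ)ᴴ * Y).trace = (X * Φ Y).trace := by rw [← hadj, conjTranspose_conjTranspose]
    _ = star (Xᴴ * Φ Yᴴ).trace := by
      rw [hΦ, ← conjTranspose_mul, trace_conjTranspose, star_star, trace_mul_comm]
    _ = (Ψ X * Y).trace := by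
      rw [hadj, ← trace_conjTranspose, conjTranspose_mul, conjTranspose_conjTranspose,
        conjTranspose_conjTranspose, trace_mul_comm]

theorem Matrix.posSemidef_of_re_trace_mul_nonneg {𝕜 ι : Type*} [RCLike 𝕜] [Fintype ι]
    {M : Matrix ι ι 𝕜} (hM : M.IsHermitian)
    (h : ∀ A : Matrix ι ι 𝕜, A.PosSemidef → 0 ≤ RCLike.re (A * M).trace) : M.PosSemidef := by
  refine .of_dotProduct_mulVec_nonneg hM fun v => ?_
  have htr : (vecMulVec v (star v) * M).trace = star v ⬝ᵥ M *ᵥ v := by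
    rw [vecMulVec_mul, trace_vecMulVec, dotProduct_comm, dotProduct_mulVec]
  rw [RCLike.nonneg_iff, ← htr]
  exact ⟨h _ (posSemidef_vecMulVec_self_star v), htr ▸ hM.im_star_dotProduct_mulVec_self v⟩

theorem stmt1 {n m : ℕ}
    (Φ : Matrix (Fin n) (Fin n) ℂ →ₗ[ℂ] Matrix (Fin m) (Fin m) ℂ)
    (Ψ : Matrix (Fin m) (Fin m) ℂ →ₗ[ℂ] Matrix (Fin n) (Fin n) ℂ)
    (hpos : IsPositiveMap Φ) (hadj : IsHSAdjoint Φ Ψ)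
    (hineq : ∀ (p : ℝ), 0 ≤ p → p ≤ 1 →
      ∀ (A B : Matrix (Fin m) (Fin m) ℂ), A.PosSemidef → B.PosSemidef →
      ∀ (K : Matrix (Fin n) (Fin n) ℂ),
        ((Φ K)ᴴ * mpow A p * Φ K * mpow B (1 - p)).trace.re ≤
          (Kᴴ * mpow (Ψ A) p * K * mpow (Ψ B) (1 - p)).trace.re) :
    IsSchwarz Φ := by
  have hΦ := hpos.map_conjTranspose
  have hΨ : ∀ X, X.IsHermitian → (Ψ X).IsHermitian := fun X hX => by
    rw [IsHermitian, ← hadj.map_conjTranspose hΦ, hX.eq]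
  intro K
  have hgap : (Φ (Kᴴ * K) - (Φ K)ᴴ * Φ K).IsHermitian :=
    (hpos _ (posSemidef_conjTranspose_mul_self K)).isHermitian.sub
      (posSemidef_conjTranspose_mul_self (Φ K)).isHermitian
  refine posSemidef_of_re_trace_mul_nonneg hgap fun A hA => ?_
  have hΨA := hΨ A hA.isHermitian
  have h := hineq 1 zero_le_one le_rfl A 1 hA .one Kᴴ
  rw [sub_self, mpow_one hA.isHermitian, mpow_one hΨA, mpow_zero isHermitian_one,
    mpow_zero (hΨ 1 isHermitian_one), mul_one, mul_one, conjTranspose_conjTranspose, hΦ,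
    conjTranspose_conjTranspose] at h
  rw [mul_sub, trace_sub, map_sub, sub_nonneg, RCLike.re_to_complex, RCLike.re_to_complex]
  calc (A * ((Φ K)ᴴ * Φ K)).trace.re = (Φ K * A * (Φ K)ᴴ).trace.re := by
        rw [trace_mul_cycle, trace_mul_comm]
    _ ≤ (K * Ψ A * Kᴴ).trace.re := h
    _ = (A * Φ (Kᴴ * K)).trace.re := by
        rw [trace_mul_cycle, trace_mul_comm, ← hΨA.eq, ← hadj, hA.isHermitian.eq]
end

section
/- For positive definite X, Y ∈ M_n(ℂ) and any r with 0 < r < 1 or r < 0, the reverse Hölder inequality holds: tr[XY] ≥ (tr[X^r])^{1/r} (tr[Y^{r/(r-1)}])^{(r-1)/r}. -/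
open Matrix
open scoped ComplexOrder

/-!
Diagonalize `X = U diag(λ) U*` and `Y = V diag(μ) V*` and put `W = U* V`. Then
`tr[XY] = ∑ᵢⱼ |Wᵢⱼ|² λᵢ μⱼ`, and `(|Wᵢⱼ|²)` is doubly stochastic because `W` is unitary. The scalar
reverse Hölder inequality with these weights on the pairs `(i, j)` gives the claim: the row and
column sums of the weights collapse the weighted sums of `λᵢ ^ r` and `μⱼ ^ (r / (r - 1))` to
`tr[X^r]` and `tr[Y^(r/(r-1))]`.
-/

namespace Real

theorem sum_rpow_mul_rpow_one_sub_le {ι : Type*} (s : Finset ι) {f g : ι → ℝ}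
    (hf : ∀ i ∈ s, 0 ≤ f i) (hg : ∀ i ∈ s, 0 ≤ g i) {θ : ℝ} (hθ₀ : 0 < θ) (hθ₁ : θ < 1) :
    ∑ i ∈ s, f i ^ θ * g i ^ (1 - θ) ≤ (∑ i ∈ s, f i) ^ θ * (∑ i ∈ s, g i) ^ (1 - θ) := by
  have hconj : HolderConjugate θ⁻¹ (1 - θ)⁻¹ :=
    (holderConjugate_iff_eq_conjExponent (one_lt_inv₀ hθ₀ |>.mpr hθ₁)).mpr (by field_simp)
  have hf' : ∑ i ∈ s, (f i ^ θ) ^ θ⁻¹ = ∑ i ∈ s, f i :=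
    Finset.sum_congr rfl fun i hi => rpow_rpow_inv (hf i hi) hθ₀.ne'
  have hg' : ∑ i ∈ s, (g i ^ (1 - θ)) ^ (1 - θ)⁻¹ = ∑ i ∈ s, g i :=
    Finset.sum_congr rfl fun i hi => rpow_rpow_inv (hg i hi) (sub_pos.mpr hθ₁).ne'
  calc ∑ i ∈ s, f i ^ θ * g i ^ (1 - θ)
      ≤ (∑ i ∈ s, (f i ^ θ) ^ θ⁻¹) ^ (1 / θ⁻¹) *
          (∑ i ∈ s, (g i ^ (1 - θ)) ^ (1 - θ)⁻¹) ^ (1 / (1 - θ)⁻¹) :=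
        inner_le_Lp_mul_Lq_of_nonneg s hconj (fun i hi => rpow_nonneg (hf i hi) θ)
          (fun i hi => rpow_nonneg (hg i hi) (1 - θ))
    _ = (∑ i ∈ s, f i) ^ θ * (∑ i ∈ s, g i) ^ (1 - θ) := by
      rw [hf', hg', one_div, one_div, inv_inv, inv_inv]

theorem mul_mul_rpow_mul_mul_rpow_one_sub {w a b r : ℝ} (hw : 0 ≤ w) (ha : 0 ≤ a) (hb : 0 < b)
    (hr₀ : 0 < r) (hr₁ : r < 1) :
    (w * (a * b)) ^ r * (w * b ^ (r / (r - 1))) ^ (1 - r) = w * a ^ r := by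
  have hexp : r / (r - 1) * (1 - r) = -r := by
    field_simp [(sub_neg.mpr hr₁).ne]; ring
  rw [mul_rpow hw (by positivity), mul_rpow hw (by positivity), mul_rpow ha hb.le,
    ← rpow_mul hb.le, hexp]
  calc w ^ r * (a ^ r * b ^ r) * (w ^ (1 - r) * b ^ (-r))
      = w ^ (r + (1 - r)) * a ^ r * b ^ (r + -r) := by
        rw [rpow_add' hw (by norm_num), rpow_add hb]; ring
    _ = w * a ^ r := by norm_num

theorem weighted_Lp_mul_Lq_le_inner_of_lt_one {ι : Type*} (s : Finset ι) {w a b : ι → ℝ}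
    (hw : ∀ i ∈ s, 0 ≤ w i) (ha : ∀ i ∈ s, 0 ≤ a i) (hb : ∀ i ∈ s, 0 < b i)
    {r : ℝ} (hr₀ : 0 < r) (hr₁ : r < 1) :
    (∑ i ∈ s, w i * a i ^ r) ^ (1 / r) * (∑ i ∈ s, w i * b i ^ (r / (r - 1))) ^ ((r - 1) / r)
      ≤ ∑ i ∈ s, w i * (a i * b i) := by
  set A := ∑ i ∈ s, w i * a i ^ r
  set S := ∑ i ∈ s, w i * (a i * b i)
  set T := ∑ i ∈ s, w i * b i ^ (r / (r - 1))
  have hab : ∀ i ∈ s, 0 ≤ w i * (a i * b i) := fun i hi =>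
    mul_nonneg (hw i hi) (mul_nonneg (ha i hi) (hb i hi).le)
  have hbq : ∀ i ∈ s, 0 ≤ w i * b i ^ (r / (r - 1)) := fun i hi =>
    mul_nonneg (hw i hi) (rpow_nonneg (hb i hi).le _)
  have hA : 0 ≤ A := Finset.sum_nonneg fun i hi => mul_nonneg (hw i hi) (rpow_nonneg (ha i hi) _)
  have hS : 0 ≤ S := Finset.sum_nonneg hab
  have hT : 0 ≤ T := Finset.sum_nonneg hbq
  have key : A ≤ S ^ r * T ^ (1 - r) :=
    calc A = ∑ i ∈ s, (w i * (a i * b i)) ^ r * (w i * b i ^ (r / (r - 1))) ^ (1 - r) :=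
          Finset.sum_congr rfl fun i hi =>
            (mul_mul_rpow_mul_mul_rpow_one_sub (hw i hi) (ha i hi) (hb i hi) hr₀ hr₁).symm
      _ ≤ S ^ r * T ^ (1 - r) :=
          sum_rpow_mul_rpow_one_sub_le s hab hbq hr₀ hr₁
  rcases hT.eq_or_lt with hT0 | hTpos
  · have hA0 : A = 0 := by
      rw [← hT0, zero_rpow (sub_pos.mpr hr₁).ne', mul_zero] at key
      exact key.antisymm hA
    rw [hA0, zero_rpow (one_div_pos.mpr hr₀).ne', zero_mul]
    exact hS
  · calc A ^ (1 / r) * T ^ ((r - 1) / r)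
        ≤ (S ^ r * T ^ (1 - r)) ^ (1 / r) * T ^ ((r - 1) / r) := by gcongr
      _ = S ^ (r * (1 / r)) * T ^ ((1 - r) * (1 / r) + (r - 1) / r) := by
        rw [mul_rpow (by positivity) (by positivity), ← rpow_mul hS, ← rpow_mul hT,
          rpow_add hTpos, mul_assoc]
      _ = S := by
        rw [mul_one_div_cancel hr₀.ne', rpow_one, show (1 - r) * (1 / r) + (r - 1) / r = 0 by ring,
          rpow_zero, mul_one]

theorem weighted_Lp_mul_Lq_le_inner {ι : Type*} (s : Finset ι) {w a b : ι → ℝ}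
    (hw : ∀ i ∈ s, 0 ≤ w i) (ha : ∀ i ∈ s, 0 < a i) (hb : ∀ i ∈ s, 0 < b i)
    {r : ℝ} (hr : (0 < r ∧ r < 1) ∨ r < 0) :
    (∑ i ∈ s, w i * a i ^ r) ^ (1 / r) * (∑ i ∈ s, w i * b i ^ (r / (r - 1))) ^ ((r - 1) / r)
      ≤ ∑ i ∈ s, w i * (a i * b i) := by
  rcases hr with ⟨hr₀, hr₁⟩ | hr
  · exact weighted_Lp_mul_Lq_le_inner_of_lt_one s hw (fun i hi => (ha i hi).le) hb hr₀ hr₁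
  -- for `r < 0` the conjugate exponent lies in `(0, 1)`: exchange the roles of `a` and `b`
  have hr₁ : r - 1 < 0 := by linarith
  have hq₀ : 0 < r / (r - 1) := div_pos_of_neg_of_neg hr hr₁
  have hq₁ : r / (r - 1) < 1 := (div_lt_one_of_neg hr₁).mpr (by linarith)
  have H := weighted_Lp_mul_Lq_le_inner_of_lt_one s hw (fun i hi => (hb i hi).le) ha hq₀ hq₁
  have hr' : r ≠ 0 := hr.ne
  have hr₁' : r - 1 ≠ 0 := hr₁.ne
  have e₁ : r / (r - 1) / (r / (r - 1) - 1) = r := by field_simp; ring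
  have e₂ : 1 / (r / (r - 1)) = (r - 1) / r := one_div_div _ _
  have e₃ : (r / (r - 1) - 1) / (r / (r - 1)) = 1 / r := by field_simp; ring
  rw [e₁, e₂, e₃, mul_comm] at H
  simpa only [mul_comm (b _) (a _)] using H

end Real

namespace Matrix

variable {n : Type*} [Fintype n] [DecidableEq n]

theorem of_normSq_mem_doublyStochastic {U : Matrix n n ℂ} (hU : U ∈ unitaryGroup n ℂ) :
    of (fun i j => Complex.normSq (U i j)) ∈ doublyStochastic ℝ n := by
  have row (i : n) : ∑ j, Complex.normSq (U i j) = 1 := by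
    have h := congr_fun₂ (mem_unitaryGroup_iff.mp hU) i i
    simp only [mul_apply, star_apply, RCLike.star_def, Complex.mul_conj, one_apply_eq] at h
    exact_mod_cast h
  have col (j : n) : ∑ i, Complex.normSq (U i j) = 1 := by
    have h := congr_fun₂ (mem_unitaryGroup_iff'.mp hU) j j
    simp only [mul_apply, star_apply, RCLike.star_def, mul_comm (starRingEnd ℂ _),
      Complex.mul_conj, one_apply_eq] at h
    exact_mod_cast h
  exact mem_doublyStochastic_iff_sum.mpr ⟨fun i j => Complex.normSq_nonneg _, row, col⟩

theorem trace_diagonal_mul_mul_diagonal_mul_star (W : Matrix n n ℂ) (d e : n → ℝ) :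
    (diagonal (fun i => (d i : ℂ)) * W * diagonal (fun j => (e j : ℂ)) * star W).trace
      = ((∑ i, ∑ j, Complex.normSq (W i j) * (d i * e j) : ℝ) : ℂ) := by
  push_cast
  refine Finset.sum_congr rfl fun i _ => Finset.sum_congr rfl fun j _ => ?_
  simp only [mul_diagonal, diagonal_mul, star_apply, RCLike.star_def]
  rw [← Complex.mul_conj]
  ring

theorem IsHermitian.trace_mul {A B : Matrix n n ℂ} (hA : A.IsHermitian) (hB : B.IsHermitian) :
    (A * B).trace = ((∑ i, ∑ j,
      Complex.normSq ((star (hA.eigenvectorUnitary : Matrix n n ℂ) * hB.eigenvectorUnitary) i j) *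
        (hA.eigenvalues i * hB.eigenvalues j) : ℝ) : ℂ) := by
  set U : Matrix n n ℂ := ↑hA.eigenvectorUnitary
  set V : Matrix n n ℂ := ↑hB.eigenvectorUnitary
  have hA' : A = U * diagonal (fun i => (hA.eigenvalues i : ℂ)) * star U := hA.spectral_theorem
  have hB' : B = V * diagonal (fun j => (hB.eigenvalues j : ℂ)) * star V := hB.spectral_theorem
  rw [← trace_diagonal_mul_mul_diagonal_mul_star, star_mul, star_star]
  conv_lhs => rw [hA', hB']
  set D := diagonal (fun i => (hA.eigenvalues i : ℂ))
  set E := diagonal (fun j => (hB.eigenvalues j : ℂ))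
  calc (U * D * star U * (V * E * star V)).trace
      = (U * (D * star U * (V * E * star V))).trace := by simp only [Matrix.mul_assoc]
    _ = (D * star U * (V * E * star V) * U).trace := trace_mul_comm _ _
    _ = (D * (star U * V) * E * (star V * U)).trace := by simp only [Matrix.mul_assoc]

theorem Lp_mul_Lq_le_sum_mul_of_mem_doublyStochastic {M : Matrix n n ℝ}
    (hM : M ∈ doublyStochastic ℝ n) {a b : n → ℝ} (ha : ∀ i, 0 < a i) (hb : ∀ j, 0 < b j)
    {r : ℝ} (hr : (0 < r ∧ r < 1) ∨ r < 0) :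
    (∑ i, a i ^ r) ^ (1 / r) * (∑ j, b j ^ (r / (r - 1))) ^ ((r - 1) / r)
      ≤ ∑ i, ∑ j, M i j * (a i * b j) := by
  have H := Real.weighted_Lp_mul_Lq_le_inner (Finset.univ : Finset (n × n))
    (w := fun p => M p.1 p.2) (a := fun p => a p.1) (b := fun p => b p.2)
    (fun p _ => nonneg_of_mem_doublyStochastic hM) (fun p _ => ha p.1) (fun p _ => hb p.2) hr
  have row (f : n → ℝ) : ∑ p : n × n, M p.1 p.2 * f p.1 = ∑ i, f i := by
    simp only [Fintype.sum_prod_type, ← Finset.sum_mul, sum_row_of_mem_doublyStochastic hM,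
      one_mul]
  have col (f : n → ℝ) : ∑ p : n × n, M p.1 p.2 * f p.2 = ∑ j, f j := by
    simp only [Fintype.sum_prod_type_right, ← Finset.sum_mul, sum_col_of_mem_doublyStochastic hM,
      one_mul]
  rwa [row (a · ^ r), col (b · ^ (r / (r - 1))), Fintype.sum_prod_type] at H

end Matrix

theorem trace_mpow {k : ℕ} {A : Matrix (Fin k) (Fin k) ℂ} (hA : A.IsHermitian) (p : ℝ) :
    (mpow A p).trace = ((∑ i, hA.eigenvalues i ^ p : ℝ) : ℂ) := by
  rw [mpow, dif_pos hA, Matrix.trace_mul_cycle, ← Matrix.star_eq_conjTranspose,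
    Unitary.coe_star_mul_self, one_mul, Matrix.trace_diagonal]
  norm_cast

theorem stmt7 {n : ℕ} (X Y : Matrix (Fin n) (Fin n) ℂ) (hX : X.PosDef) (hY : Y.PosDef)
    (r : ℝ) (hr : (0 < r ∧ r < 1) ∨ r < 0) :
    (X * Y).trace.re ≥
      ((mpow X r).trace.re) ^ (1 / r) * ((mpow Y (r / (r - 1))).trace.re) ^ ((r - 1) / r) := by
  rw [ge_iff_le, trace_mpow hX.isHermitian, trace_mpow hY.isHermitian,
    hX.isHermitian.trace_mul hY.isHermitian]
  simp only [Complex.ofReal_re]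
  exact Lp_mul_Lq_le_sum_mul_of_mem_doublyStochastic
    (of_normSq_mem_doublyStochastic (star hX.isHermitian.eigenvectorUnitary *
      hY.isHermitian.eigenvectorUnitary).2) hX.eigenvalues_pos hY.eigenvalues_pos hr
end
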